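/- arXiv:1102.3471 — 3 statements merged into one kernel-verified Lean document; each statement's English description precedes it below -/
import Mathlib

section
/- Let (M_e, g, ψ, φ) be an m-dimensional exponential family with dual coordinates θ, η (θ^i = ∂^i φ(η), η_i = ∂_i ψ(θ), ψ(θ)+φ(η)−θ^iη_i = 0, g^{ij}(η) = ∂^i∂^j φ(η)). Define ν(η) = 1/(c^0 + c^iη_i) (on a region where c^0 + c^iη_i > 0), h_α = ν(η)(d_α + D_α^i η_i) with rank D = m, and φ̄(h) = ν(η) φ(η). Then ḡ^{αβ}(h) := ν(η) C^{αi} C^{βj} g^{ij}(η), the conformally transformed metric in h-coordinates with C^{αi} = ∂η_i/∂h_α, satisfies ḡ^{αβ} = ∂^α ∂^β φ̄(h). -/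
noncomputable def pd {m : ℕ} (i : Fin m) (f : (Fin m → ℝ) → ℝ) (x : Fin m → ℝ) : ℝ :=
  fderiv ℝ f x (Pi.single i 1)

lemma clm_apply_eq_sum {m : ℕ} (L : (Fin m → ℝ) →L[ℝ] ℝ) (v : Fin m → ℝ) :
    L v = ∑ i, v i * L (Pi.single i 1) := by
  have hv : v = ∑ i, v i • (Pi.single i (1:ℝ) : Fin m → ℝ) := by
    funext j
    simp [Finset.sum_apply, Pi.single_apply]
  conv_lhs => rw [hv]
  simp [smul_eq_mul]

set_option maxHeartbeats 2000000 in
/-- for an exponential family with potential `φ(η)` and metric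
`g^{ij} = ∂^i∂^j φ`, the conformal gauge `ν(η) = 1/(c^0 + c^iη_i)`, the new coordinates
`h_α = ν(d_α + D_α^i η_i)` (rank `D = m`) and the potential `φ̄(h) = ν φ` satisfy
`ḡ^{αβ}(h) = ν C^{αi}C^{βj} g^{ij} = ∂^α∂^β φ̄(h)`, where `η = E(h)` is the inverse
coordinate transformation and `C^{αi} = ∂η_i/∂h_α`. -/
theorem stmt12 {m : ℕ}
    (O : Set (Fin m → ℝ)) (hO : IsOpen O) (hC : Convex ℝ O)
    (ψ φ : (Fin m → ℝ) → ℝ) (hφ : ContDiffOn ℝ (⊤ : ℕ∞) φ O)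
    (θf : (Fin m → ℝ) → Fin m → ℝ) (hθ : ∀ x ∈ O, ∀ i, θf x i = pd i φ x)
    (hLeg : ∀ x ∈ O, ψ (θf x) + φ x - ∑ i, θf x i * x i = 0)
    (gup : Fin m → Fin m → (Fin m → ℝ) → ℝ)
    (hgup : ∀ i j x, gup i j x = pd i (fun y => pd j φ y) x)
    (c0 : ℝ) (c : Fin m → ℝ) (hpos : ∀ x ∈ O, 0 < c0 + ∑ i, c i * x i)
    (ν : (Fin m → ℝ) → ℝ) (hν : ∀ x, ν x = 1 / (c0 + ∑ i, c i * x i))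
    (d : Fin m → ℝ) (D : Fin m → Fin m → ℝ)
    (hD : ∀ v : Fin m → ℝ, (∀ a, ∑ i, D a i * v i = 0) → v = 0)
    (hmap : (Fin m → ℝ) → Fin m → ℝ)
    (hhm : ∀ x a, hmap x a = ν x * (d a + ∑ i, D a i * x i))
    (Hs : Set (Fin m → ℝ)) (hHs : IsOpen Hs)
    (E : (Fin m → ℝ) → (Fin m → ℝ)) (hE : ContDiffOn ℝ (⊤ : ℕ∞) E Hs)
    (hEO : ∀ y ∈ Hs, E y ∈ O)
    (hinv : ∀ y ∈ Hs, hmap (E y) = y)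
    (hinv2 : ∀ x ∈ O, hmap x ∈ Hs ∧ E (hmap x) = x)
    (Cf : Fin m → Fin m → (Fin m → ℝ) → ℝ)
    (hCf : ∀ a i y, Cf a i y = pd a (fun z => E z i) y)
    (φb : (Fin m → ℝ) → ℝ) (hφb : ∀ y, φb y = ν (E y) * φ (E y)) :
    ∀ a b, ∀ y ∈ Hs,
      ν (E y) * ∑ i, ∑ j, Cf a i y * Cf b j y * gup i j (E y) =
        pd a (fun z => pd b φb z) y := by
  intro a b y hy
  classical
  -- abbreviations
  set w : (Fin m → ℝ) → ℝ := fun z => c0 + ∑ i, c i * E z i with hw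
  -- basic regularity facts
  have hEc : ∀ z ∈ Hs, ContDiffAt ℝ (⊤ : ℕ∞) E z := fun z hz => hE.contDiffAt (hHs.mem_nhds hz)
  have hE' : ∀ z ∈ Hs, HasFDerivAt E (fderiv ℝ E z) z := fun z hz =>
    ((hEc z hz).differentiableAt (by simp)).hasFDerivAt
  have hEi : ∀ (i : Fin m), ∀ z ∈ Hs, HasFDerivAt (fun z => E z i)
      ((ContinuousLinearMap.proj (R := ℝ) (φ := fun _ : Fin m => ℝ) i).comp (fderiv ℝ E z)) z :=
    fun i z hz =>
      ((ContinuousLinearMap.proj (R := ℝ) (φ := fun _ : Fin m => ℝ) i).hasFDerivAt.comp z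
        (hE' z hz) :)
  have hCfval : ∀ (p i : Fin m), ∀ z ∈ Hs, Cf p i z = fderiv ℝ E z (Pi.single p 1) i := by
    intro p i z hz
    rw [hCf, pd, (hEi i z hz).fderiv]
    rfl
  -- smoothness of Cf
  have hCfdiff : ∀ (p i : Fin m), ∀ z ∈ Hs, HasFDerivAt (Cf p i) (fderiv ℝ (Cf p i) z) z := by
    intro p i z hz
    have hfun : Cf p i = fun z => (fderiv ℝ (fun z => E z i) z) (Pi.single p 1) :=
      funext fun z => by rw [hCf]; rfl
    have hEis : ContDiffAt ℝ (⊤ : ℕ∞) (fun z => E z i) z :=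
      (ContinuousLinearMap.proj (R := ℝ) (φ := fun _ : Fin m => ℝ) i).contDiff.contDiffAt.comp z
        (hEc z hz)
    have hsm : ContDiffAt ℝ (⊤ : ℕ∞) (Cf p i) z := by
      rw [hfun]
      exact (hEis.fderiv_right (by simp)).clm_apply contDiffAt_const
    exact (hsm.differentiableAt (by simp)).hasFDerivAt
  -- derivative of w
  have hw' : ∀ z ∈ Hs, HasFDerivAt w
      (∑ i, c i • ((ContinuousLinearMap.proj (R := ℝ) (φ := fun _ : Fin m => ℝ) i).comp
        (fderiv ℝ E z))) z := by
    intro z hz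
    have := HasFDerivAt.fun_sum (u := Finset.univ)
      (fun i _ => (hEi i z hz).const_mul (c i))
    exact this.const_add c0
  have hwapp : ∀ (p : Fin m), ∀ z ∈ Hs,
      (∑ i, c i • ((ContinuousLinearMap.proj (R := ℝ) (φ := fun _ : Fin m => ℝ) i).comp
        (fderiv ℝ E z))) (Pi.single p 1) = ∑ i, c i * Cf p i z := by
    intro p z hz
    rw [ContinuousLinearMap.sum_apply]
    refine Finset.sum_congr rfl fun i _ => ?_
    rw [hCfval p i z hz]
    rfl
  have hwpos : ∀ z ∈ Hs, 0 < w z := fun z hz => hpos (E z) (hEO z hz)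
  -- derivative facts for φ on O
  have hφC : ∀ x ∈ O, ContDiffAt ℝ (⊤ : ℕ∞) φ x := fun x hx => hφ.contDiffAt (hO.mem_nhds hx)
  have hφ1 : ∀ x ∈ O, HasFDerivAt φ (fderiv ℝ φ x) x := fun x hx =>
    ((hφC x hx).differentiableAt (by simp)).hasFDerivAt
  have hφ2 : ∀ x ∈ O, HasFDerivAt (fderiv ℝ φ) (fderiv ℝ (fderiv ℝ φ) x) x := fun x hx =>
    ((((hφC x hx).fderiv_right (m := (⊤ : ℕ∞)) (by simp))).differentiableAt (by simp)).hasFDerivAt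
  -- derivative of z ↦ pd i φ (E z)
  have hpdi : ∀ (i : Fin m), ∀ x ∈ O, HasFDerivAt (fun x => pd i φ x)
      ((ContinuousLinearMap.apply ℝ ℝ (Pi.single i 1)).comp (fderiv ℝ (fderiv ℝ φ) x)) x := by
    intro i x hx
    exact ((ContinuousLinearMap.apply ℝ ℝ (Pi.single i 1)).hasFDerivAt.comp x (hφ2 x hx) :)
  have hθE : ∀ (i : Fin m), ∀ z ∈ Hs, HasFDerivAt (fun z => pd i φ (E z))
      (((ContinuousLinearMap.apply ℝ ℝ (Pi.single i 1)).comp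
        (fderiv ℝ (fderiv ℝ φ) (E z))).comp (fderiv ℝ E z)) z := by
    intro i z hz
    exact ((hpdi i (E z) (hEO z hz)).comp z (hE' z hz) :)
  -- second derivative values of φ are gup
  have hgval : ∀ (i j : Fin m), ∀ x ∈ O,
      (fderiv ℝ (fderiv ℝ φ) x) (Pi.single j 1) (Pi.single i 1) = gup j i x := by
    intro i j x hx
    rw [hgup, pd, (hpdi i x hx).fderiv]
    rfl
  -- derivative of φ ∘ E
  have hφE : ∀ z ∈ Hs, HasFDerivAt (fun z => φ (E z))
      ((fderiv ℝ φ (E z)).comp (fderiv ℝ E z)) z := fun z hz =>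
    ((hφ1 (E z) (hEO z hz)).comp z (hE' z hz) :)
  -- derivative of (w z)⁻¹
  have hiw : ∀ z ∈ Hs, HasFDerivAt (fun z => (w z)⁻¹)
      ((-(ContinuousLinearMap.mulLeftRight ℝ ℝ (w z)⁻¹ (w z)⁻¹)).comp
        (∑ i, c i • ((ContinuousLinearMap.proj (R := ℝ) (φ := fun _ : Fin m => ℝ) i).comp
          (fderiv ℝ E z)))) z := fun z hz =>
    ((hasFDerivAt_inv' (𝕜 := ℝ) (hwpos z hz).ne').comp z (hw' z hz) :)
  -- value of (fderiv φ (E z)).comp (fderiv E z) at basis vector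
  have hφEapp : ∀ (p : Fin m), ∀ z ∈ Hs,
      ((fderiv ℝ φ (E z)).comp (fderiv ℝ E z)) (Pi.single p 1)
        = ∑ i, Cf p i z * pd i φ (E z) := by
    intro p z hz
    rw [ContinuousLinearMap.comp_apply, clm_apply_eq_sum]
    refine Finset.sum_congr rfl fun i _ => ?_
    rw [← hCfval p i z hz]
    rfl
  have hiwapp : ∀ (p : Fin m), ∀ z ∈ Hs,
      ((-(ContinuousLinearMap.mulLeftRight ℝ ℝ (w z)⁻¹ (w z)⁻¹)).comp
        (∑ i, c i • ((ContinuousLinearMap.proj (R := ℝ) (φ := fun _ : Fin m => ℝ) i).comp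
          (fderiv ℝ E z)))) (Pi.single p 1)
        = -((w z)⁻¹ * (∑ i, c i * Cf p i z) * (w z)⁻¹) := by
    intro p z hz
    rw [ContinuousLinearMap.comp_apply, hwapp p z hz]
    simp [ContinuousLinearMap.mulLeftRight_apply, Finset.mul_sum, Finset.sum_mul]
  -- φb as a concrete function
  have hφbEq : φb = fun z => (w z)⁻¹ * φ (E z) := by
    funext z
    rw [hφb, hν, one_div, hw]
  -- first derivative of φb on Hs
  have hpdφb : ∀ z ∈ Hs, pd b φb z =
      (w z)⁻¹ * (∑ i, Cf b i z * pd i φ (E z))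
        - (w z)⁻¹ * ((w z)⁻¹ * (φ (E z) * (∑ i, c i * Cf b i z))) := by
    intro z hz
    have hmul := (hiw z hz).fun_mul (hφE z hz)
    rw [pd, hφbEq, hmul.fderiv]
    rw [ContinuousLinearMap.add_apply, ContinuousLinearMap.smul_apply,
      ContinuousLinearMap.smul_apply, hφEapp b z hz, hiwapp b z hz]
    simp only [smul_eq_mul]
    ring
  -- switch the outer derivative to the explicit formula
  have hev : (fun z => pd b φb z) =ᶠ[nhds y]
      (fun z => (w z)⁻¹ * (∑ i, Cf b i z * pd i φ (E z))
        - (w z)⁻¹ * ((w z)⁻¹ * (φ (E z) * (∑ i, c i * Cf b i z)))) :=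
    Filter.eventuallyEq_of_mem (hHs.mem_nhds hy) hpdφb
  have hred : pd a (fun z => pd b φb z) y =
      fderiv ℝ (fun z => (w z)⁻¹ * (∑ i, Cf b i z * pd i φ (E z))
        - (w z)⁻¹ * ((w z)⁻¹ * (φ (E z) * (∑ i, c i * Cf b i z)))) y (Pi.single a 1) := by
    rw [pd, hev.fderiv_eq]
  -- names for the scalar quantities at y
  set κ : Fin m → ℝ := fun i => fderiv ℝ (Cf b i) y (Pi.single a 1) with hκdef
  set W : ℝ := w y with hW
  set Sa : ℝ := ∑ i, c i * Cf a i y with hSa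
  set Sb : ℝ := ∑ i, c i * Cf b i y with hSb
  set Ta : ℝ := ∑ i, Cf a i y * pd i φ (E y) with hTa
  set Tb : ℝ := ∑ i, Cf b i y * pd i φ (E y) with hTb
  set f0 : ℝ := φ (E y) with hf0
  have hW0 : W ≠ 0 := (hwpos y hy).ne'
  -- derivative of A := ∑ i Cf b i z * pd i φ (E z)
  have hA : HasFDerivAt (fun z => ∑ i, Cf b i z * pd i φ (E z))
      (∑ i, (Cf b i y • (((ContinuousLinearMap.apply ℝ ℝ (Pi.single i 1)).comp
          (fderiv ℝ (fderiv ℝ φ) (E y))).comp (fderiv ℝ E y))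
        + pd i φ (E y) • fderiv ℝ (Cf b i) y)) y :=
    HasFDerivAt.fun_sum fun i _ => (hCfdiff b i y hy).mul (hθE i y hy)
  have hθEapp : ∀ (i : Fin m),
      (((ContinuousLinearMap.apply ℝ ℝ (Pi.single i 1)).comp
        (fderiv ℝ (fderiv ℝ φ) (E y))).comp (fderiv ℝ E y)) (Pi.single a 1)
      = ∑ j, Cf a j y * gup j i (E y) := by
    intro i
    have key := clm_apply_eq_sum ((ContinuousLinearMap.apply ℝ ℝ (Pi.single i 1)).comp
      (fderiv ℝ (fderiv ℝ φ) (E y))) (fderiv ℝ E y (Pi.single a 1))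
    simp only [ContinuousLinearMap.comp_apply, ContinuousLinearMap.apply_apply] at key ⊢
    rw [key]
    refine Finset.sum_congr rfl fun j _ => ?_
    rw [← hCfval a j y hy, hgval i j (E y) (hEO y hy)]
  have hAapp : (∑ i, (Cf b i y • (((ContinuousLinearMap.apply ℝ ℝ (Pi.single i 1)).comp
          (fderiv ℝ (fderiv ℝ φ) (E y))).comp (fderiv ℝ E y))
        + pd i φ (E y) • fderiv ℝ (Cf b i) y)) (Pi.single a 1)
      = ∑ i, (Cf b i y * (∑ j, Cf a j y * gup j i (E y)) + pd i φ (E y) * κ i) := by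
    rw [ContinuousLinearMap.sum_apply]
    refine Finset.sum_congr rfl fun i _ => ?_
    rw [ContinuousLinearMap.add_apply, ContinuousLinearMap.smul_apply,
      ContinuousLinearMap.smul_apply, hθEapp i]
    simp [smul_eq_mul, hκdef]
  -- derivative of B := ∑ i c i * Cf b i z
  have hB : HasFDerivAt (fun z => ∑ i, c i * Cf b i z)
      (∑ i, c i • fderiv ℝ (Cf b i) y) y :=
    HasFDerivAt.fun_sum fun i _ => (hCfdiff b i y hy).const_mul (c i)
  have hBapp : (∑ i, c i • fderiv ℝ (Cf b i) y) (Pi.single a 1) = ∑ i, c i * κ i := by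
    rw [ContinuousLinearMap.sum_apply]
    exact Finset.sum_congr rfl fun i _ => by simp [smul_eq_mul, hκdef]
  -- full derivative of the first-derivative formula
  have hP := ((hiw y hy).fun_mul hA).fun_sub ((hiw y hy).fun_mul ((hiw y hy).fun_mul ((hφE y hy).fun_mul hB)))
  have hPval : fderiv ℝ (fun z => (w z)⁻¹ * (∑ i, Cf b i z * pd i φ (E z))
        - (w z)⁻¹ * ((w z)⁻¹ * (φ (E z) * (∑ i, c i * Cf b i z)))) y (Pi.single a 1)
      = (W⁻¹ * (∑ i, (Cf b i y * (∑ j, Cf a j y * gup j i (E y)) + pd i φ (E y) * κ i))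
          + Tb * (-(W⁻¹ * Sa * W⁻¹)))
        - (W⁻¹ * ((W⁻¹ * (f0 * (∑ i, c i * κ i) + Sb * Ta))
              + (f0 * Sb) * (-(W⁻¹ * Sa * W⁻¹)))
            + (W⁻¹ * (f0 * Sb)) * (-(W⁻¹ * Sa * W⁻¹))) := by
    rw [hP.fderiv]
    rw [ContinuousLinearMap.sub_apply, ContinuousLinearMap.add_apply,
      ContinuousLinearMap.add_apply, ContinuousLinearMap.smul_apply,
      ContinuousLinearMap.smul_apply, ContinuousLinearMap.smul_apply,
      ContinuousLinearMap.smul_apply, ContinuousLinearMap.add_apply,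
      ContinuousLinearMap.smul_apply, ContinuousLinearMap.smul_apply,
      ContinuousLinearMap.add_apply, ContinuousLinearMap.smul_apply,
      ContinuousLinearMap.smul_apply,
      hAapp, hBapp, hiwapp a y hy, hφEapp a y hy]
    simp only [smul_eq_mul, ← hW, ← hSa, ← hSb, ← hTa, ← hTb, ← hf0]
  -- the inverse relation, written without division
  have hrel : ∀ (p : Fin m), ∀ z ∈ Hs, d p + ∑ i, D p i * E z i = z p * w z := by
    intro p z hz
    have h1 : hmap (E z) p = z p := by rw [hinv z hz]
    rw [hhm, hν] at h1
    have hne : c0 + ∑ i, c i * E z i ≠ 0 := (hwpos z hz).ne'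
    rw [one_div] at h1
    have hwe : w z = c0 + ∑ i, c i * E z i := rfl
    rw [hwe]
    field_simp at h1
    linarith [h1]
  -- first differentiation of the inverse relation
  have star : ∀ (p q : Fin m), ∀ z ∈ Hs,
      ∑ i, D p i * Cf q i z
        = z p * (∑ i, c i * Cf q i z) + w z * (Pi.single q 1 : Fin m → ℝ) p := by
    intro p q z hz
    have hL : HasFDerivAt (fun z => d p + ∑ i, D p i * E z i)
        (∑ i, D p i • ((ContinuousLinearMap.proj (R := ℝ) (φ := fun _ : Fin m => ℝ) i).comp
          (fderiv ℝ E z))) z :=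
      (HasFDerivAt.fun_sum fun i _ => (hEi i z hz).const_mul (D p i)).const_add (d p)
    have hproj : HasFDerivAt (fun z : Fin m → ℝ => z p)
        (ContinuousLinearMap.proj (R := ℝ) (φ := fun _ : Fin m => ℝ) p) z :=
      (ContinuousLinearMap.proj (R := ℝ) (φ := fun _ : Fin m => ℝ) p).hasFDerivAt
    have hR := hproj.fun_mul (hw' z hz)
    have heq : (fun z => d p + ∑ i, D p i * E z i) =ᶠ[nhds z] (fun z => z p * w z) :=
      Filter.eventuallyEq_of_mem (hHs.mem_nhds hz) (fun z' hz' => hrel p z' hz')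
    have hfd : fderiv ℝ (fun z => d p + ∑ i, D p i * E z i) z
        = fderiv ℝ (fun z => z p * w z) z := heq.fderiv_eq
    rw [hL.fderiv, hR.fderiv] at hfd
    have happ := congrArg (fun L : (Fin m → ℝ) →L[ℝ] ℝ => L (Pi.single q 1)) hfd
    simp only [ContinuousLinearMap.sum_apply, ContinuousLinearMap.add_apply,
      ContinuousLinearMap.smul_apply, ContinuousLinearMap.comp_apply,
      ContinuousLinearMap.proj_apply, smul_eq_mul] at happ
    have hc1 : ∀ i : Fin m, Cf q i z = fderiv ℝ E z (Pi.single q 1) i :=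
      fun i => hCfval q i z hz
    have hs1 : ∑ i, D p i * Cf q i z = ∑ i, D p i * fderiv ℝ E z (Pi.single q 1) i :=
      Finset.sum_congr rfl fun i _ => by rw [hc1 i]
    have hs2 : ∑ i, c i * fderiv ℝ E z (Pi.single q 1) i = ∑ i, c i * Cf q i z :=
      Finset.sum_congr rfl fun i _ => by rw [hc1 i]
    rw [hs1, ← hs2]
    exact happ
  -- second differentiation, at y, with q = b
  have starstar : ∀ (p : Fin m),
      ∑ i, D p i * κ i
        = (y p * (∑ i, c i * κ i) + Sb * (Pi.single a 1 : Fin m → ℝ) p)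
          + (Pi.single b 1 : Fin m → ℝ) p * Sa := by
    intro p
    have hL2 : HasFDerivAt (fun z => ∑ i, D p i * Cf b i z)
        (∑ i, D p i • fderiv ℝ (Cf b i) y) y :=
      HasFDerivAt.fun_sum fun i _ => (hCfdiff b i y hy).const_mul (D p i)
    have hproj : HasFDerivAt (fun z : Fin m → ℝ => z p)
        (ContinuousLinearMap.proj (R := ℝ) (φ := fun _ : Fin m => ℝ) p) y :=
      (ContinuousLinearMap.proj (R := ℝ) (φ := fun _ : Fin m => ℝ) p).hasFDerivAt
    have hR2 := (hproj.fun_mul hB).fun_add ((hw' y hy).mul_const ((Pi.single b 1 : Fin m → ℝ) p))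
    have heq : (fun z => ∑ i, D p i * Cf b i z)
        =ᶠ[nhds y] (fun z => z p * (∑ i, c i * Cf b i z) + w z * (Pi.single b 1 : Fin m → ℝ) p) :=
      Filter.eventuallyEq_of_mem (hHs.mem_nhds hy) (fun z' hz' => star p b z' hz')
    have hfd : fderiv ℝ (fun z => ∑ i, D p i * Cf b i z) y
        = fderiv ℝ (fun z => z p * (∑ i, c i * Cf b i z) + w z * (Pi.single b 1 : Fin m → ℝ) p) y :=
      heq.fderiv_eq
    rw [hL2.fderiv, hR2.fderiv] at hfd
    have happ := congrArg (fun L : (Fin m → ℝ) →L[ℝ] ℝ => L (Pi.single a 1)) hfd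
    simp only [ContinuousLinearMap.sum_apply, ContinuousLinearMap.add_apply,
      ContinuousLinearMap.smul_apply, ContinuousLinearMap.comp_apply,
      ContinuousLinearMap.proj_apply, smul_eq_mul] at happ
    have hc1 : ∀ i : Fin m, Cf a i y = fderiv ℝ E y (Pi.single a 1) i :=
      fun i => hCfval a i y hy
    have hs2 : ∑ i, c i * fderiv ℝ E y (Pi.single a 1) i = Sa := by
      rw [hSa]
      exact (Finset.sum_congr rfl fun i _ => by rw [hc1 i]).symm
    rw [hs2, ← hSb] at happ
    exact happ
  -- solve the linear system for κ
  have hκval : ∀ i, κ i = (Sa * Cf b i y + Sb * Cf a i y) * W⁻¹ := by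
    set M : Matrix (Fin m) (Fin m) ℝ := Matrix.of fun p i => D p i - y p * c i with hM
    have hMrow : ∀ (p : Fin m) (v : Fin m → ℝ),
        M.mulVec v p = (∑ i, D p i * v i) - y p * ∑ i, c i * v i := by
      intro p v
      simp only [Matrix.mulVec, dotProduct, hM, Matrix.of_apply]
      rw [Finset.mul_sum, ← Finset.sum_sub_distrib]
      exact Finset.sum_congr rfl fun i _ => by ring
    have hMC : ∀ q, M.mulVec (fun i => Cf q i y) = fun p => W * (Pi.single q 1 : Fin m → ℝ) p := by
      intro q
      funext p
      rw [hMrow, star p q y hy, ← hW]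
      ring
    have hMκ1 : M.mulVec κ
        = fun p => Sb * (Pi.single a 1 : Fin m → ℝ) p + (Pi.single b 1 : Fin m → ℝ) p * Sa := by
      funext p
      rw [hMrow, starstar p]
      ring
    have hMκ2 : M.mulVec (fun i => (Sa * Cf b i y + Sb * Cf a i y) * W⁻¹)
        = fun p => Sb * (Pi.single a 1 : Fin m → ℝ) p + (Pi.single b 1 : Fin m → ℝ) p * Sa := by
      funext p
      have hb' := congrFun (hMC b) p
      have ha' := congrFun (hMC a) p
      rw [hMrow] at hb' ha' ⊢
      have e1 : ∑ i, D p i * ((Sa * Cf b i y + Sb * Cf a i y) * W⁻¹)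
          = (∑ i, D p i * Cf b i y) * (Sa * W⁻¹) + (∑ i, D p i * Cf a i y) * (Sb * W⁻¹) := by
        calc ∑ i, D p i * ((Sa * Cf b i y + Sb * Cf a i y) * W⁻¹)
            = ∑ i, (D p i * Cf b i y * (Sa * W⁻¹) + D p i * Cf a i y * (Sb * W⁻¹)) :=
              Finset.sum_congr rfl fun i _ => by ring
          _ = (∑ i, D p i * Cf b i y * (Sa * W⁻¹)) + ∑ i, D p i * Cf a i y * (Sb * W⁻¹) :=
              Finset.sum_add_distrib
          _ = _ := by rw [← Finset.sum_mul, ← Finset.sum_mul]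
      have e2 : ∑ i, c i * ((Sa * Cf b i y + Sb * Cf a i y) * W⁻¹)
          = (∑ i, c i * Cf b i y) * (Sa * W⁻¹) + (∑ i, c i * Cf a i y) * (Sb * W⁻¹) := by
        calc ∑ i, c i * ((Sa * Cf b i y + Sb * Cf a i y) * W⁻¹)
            = ∑ i, (c i * Cf b i y * (Sa * W⁻¹) + c i * Cf a i y * (Sb * W⁻¹)) :=
              Finset.sum_congr rfl fun i _ => by ring
          _ = (∑ i, c i * Cf b i y * (Sa * W⁻¹)) + ∑ i, c i * Cf a i y * (Sb * W⁻¹) :=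
              Finset.sum_add_distrib
          _ = _ := by rw [← Finset.sum_mul, ← Finset.sum_mul]
      rw [e1, e2]
      have hWW : W * W⁻¹ = 1 := mul_inv_cancel₀ hW0
      have goal1 : ((∑ i, D p i * Cf b i y) - y p * ∑ i, c i * Cf b i y) * (Sa * W⁻¹)
          + ((∑ i, D p i * Cf a i y) - y p * ∑ i, c i * Cf a i y) * (Sb * W⁻¹)
          = Sb * (Pi.single a 1 : Fin m → ℝ) p + (Pi.single b 1 : Fin m → ℝ) p * Sa := by
        rw [hb', ha']
        calc W * (Pi.single b 1 : Fin m → ℝ) p * (Sa * W⁻¹) + W * (Pi.single a 1 : Fin m → ℝ) p * (Sb * W⁻¹)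
            = (W * W⁻¹) * ((Pi.single b 1 : Fin m → ℝ) p * Sa)
              + (W * W⁻¹) * ((Pi.single a 1 : Fin m → ℝ) p * Sb) := by ring
          _ = Sb * (Pi.single a 1 : Fin m → ℝ) p + (Pi.single b 1 : Fin m → ℝ) p * Sa := by rw [hWW]; ring
      linarith [goal1]
    have hsurj : Function.Surjective M.mulVecLin := by
      intro u
      refine ⟨∑ q, (u q * W⁻¹) • (fun i => Cf q i y), ?_⟩
      rw [map_sum]
      simp only [map_smul, Matrix.mulVecLin_apply, hMC]
      funext p
      simp only [Finset.sum_apply, Pi.smul_apply, smul_eq_mul]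
      have hterm : ∀ q : Fin m, u q * W⁻¹ * (W * (Pi.single q 1 : Fin m → ℝ) p)
          = u q * (Pi.single q 1 : Fin m → ℝ) p := by
        intro q
        field_simp
      rw [Finset.sum_congr rfl fun q _ => hterm q]
      simp [Pi.single_apply]
    have hinj : Function.Injective M.mulVecLin :=
      LinearMap.injective_iff_surjective.mpr hsurj
    have hfin : κ = fun i => (Sa * Cf b i y + Sb * Cf a i y) * W⁻¹ := by
      apply hinj
      rw [Matrix.mulVecLin_apply, Matrix.mulVecLin_apply, hMκ1, hMκ2]
    exact fun i => congrFun hfin i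
  -- final summation identities
  have hS1 : ∑ i, (Cf b i y * (∑ j, Cf a j y * gup j i (E y)) + pd i φ (E y) * κ i)
      = (∑ i, ∑ j, Cf a i y * Cf b j y * gup i j (E y)) + (Sa * Tb + Sb * Ta) * W⁻¹ := by
    rw [Finset.sum_add_distrib]
    congr 1
    · calc ∑ i, Cf b i y * ∑ j, Cf a j y * gup j i (E y)
          = ∑ i, ∑ j, Cf b i y * (Cf a j y * gup j i (E y)) := by
            exact Finset.sum_congr rfl fun i _ => Finset.mul_sum _ _ _
        _ = ∑ j, ∑ i, Cf b i y * (Cf a j y * gup j i (E y)) := Finset.sum_comm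
        _ = ∑ i, ∑ j, Cf a i y * Cf b j y * gup i j (E y) := by
            refine Finset.sum_congr rfl fun i _ => Finset.sum_congr rfl fun j _ => by ring
    · calc ∑ i, pd i φ (E y) * κ i
          = ∑ i, (Sa * W⁻¹ * (Cf b i y * pd i φ (E y))
              + Sb * W⁻¹ * (Cf a i y * pd i φ (E y))) := by
            refine Finset.sum_congr rfl fun i _ => ?_
            rw [hκval i]
            ring
        _ = Sa * W⁻¹ * Tb + Sb * W⁻¹ * Ta := by
            rw [Finset.sum_add_distrib, ← Finset.mul_sum, ← Finset.mul_sum, ← hTb, ← hTa]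
        _ = (Sa * Tb + Sb * Ta) * W⁻¹ := by ring
  have hS2 : ∑ i, c i * κ i = (2 * Sa * Sb) * W⁻¹ := by
    calc ∑ i, c i * κ i
        = ∑ i, (Sa * W⁻¹ * (c i * Cf b i y) + Sb * W⁻¹ * (c i * Cf a i y)) := by
          refine Finset.sum_congr rfl fun i _ => ?_
          rw [hκval i]
          ring
      _ = Sa * W⁻¹ * Sb + Sb * W⁻¹ * Sa := by
          rw [Finset.sum_add_distrib, ← Finset.mul_sum, ← Finset.mul_sum, ← hSb, ← hSa]
      _ = (2 * Sa * Sb) * W⁻¹ := by ring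
  have hν' : ν (E y) = W⁻¹ := by
    rw [hν, one_div]
  rw [hred, hPval, hS1, hS2, hν']
  field_simp
  ring
end

section
/- Let M_c be an (m+1, m)-curved exponential family (hypersurface) with orthogonal unit normal κ, i.e. g_{aκ}(u) = 0 and g_{κκ}(u) = 1. If M_c is a dual quadric hypersurface, i.e. the normal vectors satisfy B_κ^i(u) = k_0(θ^i(u) − θ_0^i) and B_{κi}(u) = l_0(η_i(u) − η_i^0) for nonzero constants k_0, l_0, then the Euler–Schouten curvatures satisfy H^{(1)}_{abκ}(u) = −l_0 g_{ab}(u) and H^{(−1)}_{abκ}(u) = −k_0 g_{ab}(u), hence H^{(−1)}_{abκ} = (k_0/l_0) H^{(1)}_{abκ}; moreover T_{aκκ}(u) = 0 and the curvature of M_c is R^{(±1)}_{abcd}(u) = k_0 l_0 (g_{ad}g_{bc} − g_{ac}g_{bd}). -/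
lemma pd_smooth {m : ℕ} {f : (Fin m → ℝ) → ℝ} (hf : ContDiff ℝ (⊤ : ℕ∞) f) (a : Fin m) :
    ContDiff ℝ (⊤ : ℕ∞) (pd a f) := by
  unfold pd
  exact (hf.fderiv_right (by simp)).clm_apply contDiff_const

lemma fderiv_apply_const {m : ℕ} {f : (Fin m → ℝ) → ℝ} (hf : ContDiff ℝ (⊤ : ℕ∞) f)
    (w x v : Fin m → ℝ) :
    fderiv ℝ (fun y => fderiv ℝ f y w) x v = fderiv ℝ (fderiv ℝ f) x v w := by
  have hd : DifferentiableAt ℝ (fderiv ℝ f) x :=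
    ((hf.fderiv_right (m := 1) (WithTop.coe_le_coe.mpr le_top)).differentiable one_ne_zero) x
  have h := ((ContinuousLinearMap.apply ℝ ℝ w).hasFDerivAt.comp x hd.hasFDerivAt).fderiv
  calc fderiv ℝ (fun y => fderiv ℝ f y w) x v
      = fderiv ℝ ((ContinuousLinearMap.apply ℝ ℝ w) ∘ (fderiv ℝ f)) x v := rfl
    _ = fderiv ℝ (fderiv ℝ f) x v w := by rw [h]; rfl

lemma pd_comm {m : ℕ} {f : (Fin m → ℝ) → ℝ} (hf : ContDiff ℝ (⊤ : ℕ∞) f) (a b : Fin m)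
    (u : Fin m → ℝ) :
    pd a (fun v => pd b f v) u = pd b (fun v => pd a f v) u := by
  unfold pd
  rw [fderiv_apply_const hf, fderiv_apply_const hf]
  exact (hf.contDiffAt.isSymmSndFDerivAt (by rw [minSmoothness_of_isRCLikeNormedField]; exact WithTop.coe_le_coe.mpr le_top)).eq _ _

lemma pd_sum {m n : ℕ} {F : Fin n → (Fin m → ℝ) → ℝ} (a : Fin m) (u : Fin m → ℝ)
    (hF : ∀ i, DifferentiableAt ℝ (F i) u) :
    pd a (fun v => ∑ i, F i v) u = ∑ i, pd a (F i) u := by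
  unfold pd
  rw [fderiv_fun_sum (fun i _ => hF i)]
  simp

lemma pd_mul {m : ℕ} {f h : (Fin m → ℝ) → ℝ} (a : Fin m) (u : Fin m → ℝ)
    (hf : DifferentiableAt ℝ f u) (hh : DifferentiableAt ℝ h u) :
    pd a (fun v => f v * h v) u = pd a f u * h u + f u * pd a h u := by
  unfold pd
  rw [fderiv_fun_mul hf hh]
  simp only [ContinuousLinearMap.add_apply, ContinuousLinearMap.smul_apply, smul_eq_mul]
  ring

lemma pd_const_mul {m : ℕ} {f : (Fin m → ℝ) → ℝ} (c : ℝ) (a : Fin m) (u : Fin m → ℝ)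
    (hf : DifferentiableAt ℝ f u) :
    pd a (fun v => c * f v) u = c * pd a f u := by
  unfold pd; rw [fderiv_const_mul hf]; simp

lemma pd_sub_const {m : ℕ} {f : (Fin m → ℝ) → ℝ} (c : ℝ) (a : Fin m) (u : Fin m → ℝ) :
    pd a (fun v => f v - c) u = pd a f u := by
  unfold pd; rw [fderiv_sub_const]

lemma pd_zero_of_eqOn {m : ℕ} {U : Set (Fin m → ℝ)} (hU : IsOpen U)
    {F : (Fin m → ℝ) → ℝ} (h : ∀ v ∈ U, F v = 0) {u : Fin m → ℝ} (hu : u ∈ U) (a : Fin m) :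
    pd a F u = 0 := by
  have he : F =ᶠ[nhds u] (fun _ => (0:ℝ)) := Filter.eventuallyEq_of_mem (hU.mem_nhds hu) h
  unfold pd
  rw [he.fderiv_eq, fderiv_fun_const]
  simp

/-- a dual quadric hypersurface (`B_κ^i = k_0(θ^i − θ_0^i)`,
`B_{κi} = l_0(η_i − η_i^0)`) with unit orthogonal normal satisfies
`H^{(1)}_{abκ} = −l_0 g_{ab}`, `H^{(−1)}_{abκ} = −k_0 g_{ab}`, hence
`H^{(−1)} = (k_0/l_0)H^{(1)}`, `T_{aκκ} = 0`, and by the Gauss equation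
`R^{(±1)}_{abcd} = k_0 l_0 (g_{ad}g_{bc} − g_{ac}g_{bd})`. -/
theorem stmt13 {m : ℕ}
    (U : Set (Fin m → ℝ)) (hU : IsOpen U)
    (θ η : Fin (m + 1) → (Fin m → ℝ) → ℝ)
    (hθsm : ∀ i, ContDiff ℝ (⊤ : ℕ∞) (θ i)) (hηsm : ∀ i, ContDiff ℝ (⊤ : ℕ∞) (η i))
    (Bk Bkd : Fin (m + 1) → (Fin m → ℝ) → ℝ)
    (k0 l0 : ℝ) (hk0 : k0 ≠ 0) (hl0 : l0 ≠ 0)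
    (θ0 η0 : Fin (m + 1) → ℝ)
    (hBk : ∀ i u, Bk i u = k0 * (θ i u - θ0 i))
    (hBkd : ∀ i u, Bkd i u = l0 * (η i u - η0 i))
    (horth1 : ∀ (a : Fin m), ∀ u ∈ U, ∑ i, Bk i u * pd a (η i) u = 0)
    (horth2 : ∀ (a : Fin m), ∀ u ∈ U, ∑ i, Bkd i u * pd a (θ i) u = 0)
    (hnorm : ∀ u ∈ U, ∑ i, Bk i u * Bkd i u = 1)
    (g H1 Hm1 : Fin m → Fin m → (Fin m → ℝ) → ℝ)
    (hg : ∀ a b u, g a b u = ∑ i, pd a (θ i) u * pd b (η i) u)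
    (hH1 : ∀ a b u, H1 a b u = ∑ i, pd a (fun v => pd b (θ i) v) u * Bkd i u)
    (hHm1 : ∀ a b u, Hm1 a b u = ∑ i, pd a (fun v => pd b (η i) v) u * Bk i u)
    (G1k Gm1k : Fin m → (Fin m → ℝ) → ℝ)
    (hG1k : ∀ a u, G1k a u = ∑ i, pd a (Bk i) u * Bkd i u)
    (hGm1k : ∀ a u, Gm1k a u = ∑ i, pd a (Bkd i) u * Bk i u) :
    ∀ (a b c e : Fin m), ∀ u ∈ U,
      H1 a b u = -l0 * g a b u ∧
      Hm1 a b u = -k0 * g a b u ∧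
      Hm1 a b u = (k0 / l0) * H1 a b u ∧
      Gm1k a u - G1k a u = 0 ∧
      Hm1 a e u * H1 b c u - Hm1 b e u * H1 a c u
        = k0 * l0 * (g a e u * g b c u - g a c u * g b e u) ∧
      H1 a e u * Hm1 b c u - H1 b e u * Hm1 a c u
        = k0 * l0 * (g a e u * g b c u - g a c u * g b e u) := by
  -- pointwise function equalities
  have hBk' : ∀ i, Bk i = fun v => k0 * (θ i v - θ0 i) := fun i => funext (hBk i)
  have hBkd' : ∀ i, Bkd i = fun v => l0 * (η i v - η0 i) := fun i => funext (hBkd i)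
  -- smoothness facts
  have hBksm : ∀ i, ContDiff ℝ (⊤ : ℕ∞) (Bk i) := by
    intro i; rw [hBk' i]
    exact ContDiff.mul contDiff_const ((hθsm i).sub contDiff_const)
  have hBkdsm : ∀ i, ContDiff ℝ (⊤ : ℕ∞) (Bkd i) := by
    intro i; rw [hBkd' i]
    exact ContDiff.mul contDiff_const ((hηsm i).sub contDiff_const)
  have hpdθsm : ∀ i (b : Fin m), ContDiff ℝ (⊤ : ℕ∞) (pd b (θ i)) := fun i b => pd_smooth (hθsm i) b
  have hpdηsm : ∀ i (b : Fin m), ContDiff ℝ (⊤ : ℕ∞) (pd b (η i)) := fun i b => pd_smooth (hηsm i) b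
  -- derivatives of the normal fields
  have hpdBk : ∀ i (a : Fin m) (u : Fin m → ℝ), pd a (Bk i) u = k0 * pd a (θ i) u := by
    intro i a u
    rw [hBk' i, pd_const_mul _ _ _ (((hθsm i).differentiable (by simp) u).sub_const _),
      pd_sub_const]
  have hpdBkd : ∀ i (a : Fin m) (u : Fin m → ℝ), pd a (Bkd i) u = l0 * pd a (η i) u := by
    intro i a u
    rw [hBkd' i, pd_const_mul _ _ _ (((hηsm i).differentiable (by simp) u).sub_const _),
      pd_sub_const]
  intro a b c e u hu
  -- key A : differentiate horth1 (index b) in direction a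
  have keyA : ∀ (a b : Fin m),
      ∑ i, pd a (fun v => pd b (η i) v) u * Bk i u = -k0 * g a b u := by
    intro a b
    have h0 : pd a (fun v => ∑ i, Bk i v * pd b (η i) v) u = 0 :=
      pd_zero_of_eqOn hU (fun v hv => horth1 b v hv) hu a
    rw [pd_sum (F := fun i v => Bk i v * pd b (η i) v) a u (fun i =>
      (((hBksm i).differentiable (by simp) u).mul (((hpdηsm i b).differentiable (by simp)) u)))]
      at h0
    have h1 : ∀ i : Fin (m+1), pd a (fun v => Bk i v * pd b (η i) v) u
        = k0 * pd a (θ i) u * pd b (η i) u + Bk i u * pd a (fun v => pd b (η i) v) u := by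
      intro i
      rw [pd_mul a u ((hBksm i).differentiable (by simp) u)
        ((hpdηsm i b).differentiable (by simp) u), hpdBk]
    rw [Finset.sum_congr rfl (fun i _ => h1 i), Finset.sum_add_distrib] at h0
    have h2 : ∑ i, k0 * pd a (θ i) u * pd b (η i) u = k0 * g a b u := by
      rw [hg, Finset.mul_sum]; exact Finset.sum_congr rfl fun i _ => by ring
    rw [h2] at h0
    have h3 : ∀ i : Fin (m+1), Bk i u * pd a (fun v => pd b (η i) v) u
        = pd a (fun v => pd b (η i) v) u * Bk i u := fun i => mul_comm _ _
    rw [Finset.sum_congr rfl (fun i _ => h3 i)] at h0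
    linarith
  -- key B : differentiate horth2 (index a) in direction b
  have keyB : ∀ (a b : Fin m),
      ∑ i, pd b (fun v => pd a (θ i) v) u * Bkd i u = -l0 * g a b u := by
    intro a b
    have h0 : pd b (fun v => ∑ i, Bkd i v * pd a (θ i) v) u = 0 :=
      pd_zero_of_eqOn hU (fun v hv => horth2 a v hv) hu b
    rw [pd_sum (F := fun i v => Bkd i v * pd a (θ i) v) b u (fun i =>
      (((hBkdsm i).differentiable (by simp) u).mul (((hpdθsm i a).differentiable (by simp)) u)))]
      at h0
    have h1 : ∀ i : Fin (m+1), pd b (fun v => Bkd i v * pd a (θ i) v) u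
        = l0 * pd b (η i) u * pd a (θ i) u + Bkd i u * pd b (fun v => pd a (θ i) v) u := by
      intro i
      rw [pd_mul b u ((hBkdsm i).differentiable (by simp) u)
        ((hpdθsm i a).differentiable (by simp) u), hpdBkd]
    rw [Finset.sum_congr rfl (fun i _ => h1 i), Finset.sum_add_distrib] at h0
    have h2 : ∑ i, l0 * pd b (η i) u * pd a (θ i) u = l0 * g a b u := by
      rw [hg, Finset.mul_sum]; exact Finset.sum_congr rfl fun i _ => by ring
    rw [h2] at h0
    have h3 : ∀ i : Fin (m+1), Bkd i u * pd b (fun v => pd a (θ i) v) u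
        = pd b (fun v => pd a (θ i) v) u * Bkd i u := fun i => mul_comm _ _
    rw [Finset.sum_congr rfl (fun i _ => h3 i)] at h0
    linarith
  -- H1 = -l0 g  (using symmetry of second derivatives)
  have hH1eq : ∀ (a b : Fin m), H1 a b u = -l0 * g a b u := by
    intro a b
    rw [hH1]
    have : ∀ i : Fin (m+1), pd a (fun v => pd b (θ i) v) u * Bkd i u
        = pd b (fun v => pd a (θ i) v) u * Bkd i u := by
      intro i; rw [pd_comm (hθsm i) a b u]
    rw [Finset.sum_congr rfl (fun i _ => this i)]
    exact keyB a b
  -- Hm1 = -k0 g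
  have hHm1eq : ∀ (a b : Fin m), Hm1 a b u = -k0 * g a b u := by
    intro a b
    rw [hHm1]
    exact keyA a b
  -- G terms vanish
  have hG1 : G1k a u = 0 := by
    rw [hG1k]
    have : ∀ i : Fin (m+1), pd a (Bk i) u * Bkd i u = k0 * (Bkd i u * pd a (θ i) u) := by
      intro i; rw [hpdBk]; ring
    rw [Finset.sum_congr rfl (fun i _ => this i), ← Finset.mul_sum, horth2 a u hu, mul_zero]
  have hGm1 : Gm1k a u = 0 := by
    rw [hGm1k]
    have : ∀ i : Fin (m+1), pd a (Bkd i) u * Bk i u = l0 * (Bk i u * pd a (η i) u) := by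
      intro i; rw [hpdBkd]; ring
    rw [Finset.sum_congr rfl (fun i _ => this i), ← Finset.mul_sum, horth1 a u hu, mul_zero]
  refine ⟨hH1eq a b, hHm1eq a b, ?_, by rw [hG1, hGm1]; ring, ?_, ?_⟩
  · rw [hH1eq a b, hHm1eq a b]
    field_simp
  · rw [hH1eq b c, hH1eq a c, hHm1eq a e, hHm1eq b e]; ring
  · rw [hH1eq a e, hH1eq b e, hHm1eq a c, hHm1eq b c]; ring
end

section
/- Conversely, let M_c be an (m+1, m)-curved exponential family hypersurface with unit orthogonal normal (g_{aκ} = 0, g_{κκ} = 1) that is ES conjugate symmetric (H^{(−1)}_{abκ} = ε H^{(1)}_{abκ}, ε ≠ 0 constant) and totally e-umbilic (H^{(1)}_{abκ} = H^{(1)}_κ g_{ab}) with constant curvature ε H^{(1)2} = k_0 l_0, and with T_{aκκ} = 0. Then there exist constant vectors θ_0, η^0 such that B_κ^i(u) = √|ε k_0 l_0| (θ^i(u) − θ_0^i) and B_{κi}(u) = √|k_0 l_0/ε| (η_i(u) − η_i^0); i.e. M_c is a dual quadric hypersurface. -/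
lemma fderiv_eq_zero_of_pd {m : ℕ} {f : (Fin m → ℝ) → ℝ} {x : Fin m → ℝ}
    (h : ∀ a, pd a f x = 0) : fderiv ℝ f x = 0 := by
  ext v
  have hv : v = ∑ i, (v i) • (Pi.single i 1 : Fin m → ℝ) := by
    funext j
    simp [Finset.sum_apply, Pi.single_apply, mul_comm]
  calc fderiv ℝ f x v = fderiv ℝ f x (∑ i, (v i) • (Pi.single i 1 : Fin m → ℝ)) := by
        rw [← hv]
    _ = ∑ i, v i * pd i f x := by
        rw [map_sum]
        simp [pd, smul_eq_mul]
    _ = 0 := by simp [h]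

lemma eq_on_of_pd_zero {m : ℕ} {U : Set (Fin m → ℝ)} (hUc : Convex ℝ U)
    {f : (Fin m → ℝ) → ℝ} (hf : Differentiable ℝ f)
    (h : ∀ a, ∀ u ∈ U, pd a f u = 0) : ∀ x ∈ U, ∀ y ∈ U, f y = f x := by
  intro x hx y hy
  have hb : ∀ u ∈ U, ‖fderiv ℝ f u‖ ≤ 0 := by
    intro u hu
    rw [fderiv_eq_zero_of_pd (fun a => h a u hu)]
    simp
  have := hUc.norm_image_sub_le_of_norm_fderiv_le (fun u _ => hf u) hb hx hy
  have h0 : ‖f y - f x‖ ≤ 0 := by simpa using this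
  have := norm_le_zero_iff.mp h0
  linarith [sub_eq_zero.mp this]

/-- conversely, an `(m+1, m)`-curved exponential family hypersurface with
unit orthogonal normal that is ES conjugate symmetric (`H^{(−1)} = ε H^{(1)}`), totally
e-umbilic (`H^{(1)}_{abκ} = H^{(1)}_κ g_{ab}`) with constant curvature
`ε H^{(1)2} = k_0 l_0` and `T_{aκκ} = 0`, is a dual quadric hypersurface:
`B_κ^i = √|ε k_0 l_0| (θ^i − θ_0^i)` and `B_{κi} = √|k_0 l_0/ε| (η_i − η_i^0)`. -/
theorem stmt14 {m : ℕ}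
    (U : Set (Fin m → ℝ)) (hU : IsOpen U) (hUc : Convex ℝ U) (hne : U.Nonempty)
    (θ η : Fin (m + 1) → (Fin m → ℝ) → ℝ)
    (hθsm : ∀ i, ContDiff ℝ (⊤ : ℕ∞) (θ i)) (hηsm : ∀ i, ContDiff ℝ (⊤ : ℕ∞) (η i))
    (Bk Bkd : Fin (m + 1) → (Fin m → ℝ) → ℝ)
    (hBksm : ∀ i, ContDiff ℝ (⊤ : ℕ∞) (Bk i)) (hBkdsm : ∀ i, ContDiff ℝ (⊤ : ℕ∞) (Bkd i))
    (horth1 : ∀ (a : Fin m), ∀ u ∈ U, ∑ i, Bk i u * pd a (η i) u = 0)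
    (horth2 : ∀ (a : Fin m), ∀ u ∈ U, ∑ i, Bkd i u * pd a (θ i) u = 0)
    (hnorm : ∀ u ∈ U, ∑ i, Bk i u * Bkd i u = 1)
    (g ginv H1 Hm1 : Fin m → Fin m → (Fin m → ℝ) → ℝ)
    (hg : ∀ a b u, g a b u = ∑ i, pd a (θ i) u * pd b (η i) u)
    (hginv : ∀ a b, ∀ u ∈ U, ∑ c, g a c u * ginv c b u = if a = b then 1 else 0)
    (hH1 : ∀ a b u, H1 a b u = ∑ i, pd a (fun v => pd b (θ i) v) u * Bkd i u)
    (hHm1 : ∀ a b u, Hm1 a b u = ∑ i, pd a (fun v => pd b (η i) v) u * Bk i u)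
    (ε k0 l0 : ℝ) (hε : ε ≠ 0) (hkl : 0 < k0 * l0) (hεkl : 0 < ε * (k0 * l0))
    (Hmean : (Fin m → ℝ) → ℝ)
    (hconj : ∀ a b, ∀ u ∈ U, Hm1 a b u = ε * H1 a b u)
    (humb : ∀ a b, ∀ u ∈ U, H1 a b u = Hmean u * g a b u)
    (hH2 : ∀ u ∈ U, ε * Hmean u ^ 2 = k0 * l0)
    (hsign : ∀ u ∈ U, Hmean u ≤ 0)
    -- normal connection components and `T_{aκκ} = 0`
    (G1k Gm1k : Fin m → (Fin m → ℝ) → ℝ)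
    (hG1k : ∀ a u, G1k a u = ∑ i, pd a (Bk i) u * Bkd i u)
    (hGm1k : ∀ a u, Gm1k a u = ∑ i, pd a (Bkd i) u * Bk i u)
    (hT : ∀ (a : Fin m), ∀ u ∈ U, Gm1k a u - G1k a u = 0)
    (hsumk : ∀ (a : Fin m), ∀ u ∈ U, G1k a u + Gm1k a u = 0)
    -- decomposition of the derivatives of the normal in the moving frame,
    -- with `Γ^{(1)}_{aκc} = −H^{(−1)}_{acκ}` and `Γ^{(−1)}_{aκc} = −H^{(1)}_{acκ}`
    (hdec1 : ∀ i (a : Fin m), ∀ u ∈ U, pd a (Bk i) u =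
      (∑ b, (∑ c, -Hm1 a c u * ginv c b u) * pd b (θ i) u) + G1k a u * Bk i u)
    (hdecm1 : ∀ i (a : Fin m), ∀ u ∈ U, pd a (Bkd i) u =
      (∑ b, (∑ c, -H1 a c u * ginv c b u) * pd b (η i) u) + Gm1k a u * Bkd i u) :
    ∃ θ0 η0 : Fin (m + 1) → ℝ, ∀ i, ∀ u ∈ U,
      Bk i u = Real.sqrt |ε * k0 * l0| * (θ i u - θ0 i) ∧
      Bkd i u = Real.sqrt |k0 * l0 / ε| * (η i u - η0 i) := by
  obtain ⟨u0, hu0⟩ := hne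
  have hεpos : 0 < ε := by nlinarith
  set c2 : ℝ := Real.sqrt (k0 * l0 / ε) with hc2def
  set c1 : ℝ := Real.sqrt (ε * k0 * l0) with hc1def
  have hεkl' : 0 < ε * k0 * l0 := by nlinarith
  have hc1pos : 0 < c1 := Real.sqrt_pos.mpr hεkl'
  have hc2pos : 0 < c2 := Real.sqrt_pos.mpr (div_pos hkl hεpos)
  have hc1c2 : c1 = ε * c2 := by
    have h1 : ε * c2 = Real.sqrt (ε ^ 2 * (k0 * l0 / ε)) := by
      rw [Real.sqrt_mul (sq_nonneg ε), Real.sqrt_sq hεpos.le]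
    have h2 : ε ^ 2 * (k0 * l0 / ε) = ε * k0 * l0 := by
      field_simp
    rw [h1, h2]
  -- value of the mean curvature
  have hHm : ∀ u ∈ U, Hmean u = -c2 := by
    intro u hu
    have h1 : Hmean u ^ 2 = k0 * l0 / ε := by
      rw [eq_div_iff hε]
      linarith [hH2 u hu]
    have h2 : Real.sqrt (Hmean u ^ 2) = -Hmean u := by
      rw [Real.sqrt_sq_eq_abs, abs_of_nonpos (hsign u hu)]
    rw [h1] at h2
    linarith [h2]
  -- vanishing of the normal connection components
  have hG0 : ∀ a, ∀ u ∈ U, G1k a u = 0 ∧ Gm1k a u = 0 := by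
    intro a u hu
    have h1 := hT a u hu
    have h2 := hsumk a u hu
    constructor <;> linarith
  -- the key differential equations
  have key1 : ∀ i a, ∀ u ∈ U, pd a (Bk i) u = c1 * pd a (θ i) u := by
    intro i a u hu
    rw [hdec1 i a u hu, (hG0 a u hu).1]
    have hin : ∀ b : Fin m, (∑ c, -Hm1 a c u * ginv c b u)
        = (-ε * Hmean u) * (if a = b then 1 else 0) := by
      intro b
      rw [← hginv a b u hu, Finset.mul_sum]
      apply Finset.sum_congr rfl
      intro c _
      rw [hconj a c u hu, humb a c u hu]
      ring
    simp only [hin, zero_mul, add_zero]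
    have hsum : ∑ b, (-ε * Hmean u) * (if a = b then 1 else 0) * pd b (θ i) u
        = (-ε * Hmean u) * pd a (θ i) u := by
      simp [ite_mul, mul_ite]
    rw [hsum, hHm u hu, hc1c2]
    ring
  have key2 : ∀ i a, ∀ u ∈ U, pd a (Bkd i) u = c2 * pd a (η i) u := by
    intro i a u hu
    rw [hdecm1 i a u hu, (hG0 a u hu).2]
    have hin : ∀ b : Fin m, (∑ c, -H1 a c u * ginv c b u)
        = (-Hmean u) * (if a = b then 1 else 0) := by
      intro b
      rw [← hginv a b u hu, Finset.mul_sum]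
      apply Finset.sum_congr rfl
      intro c _
      rw [humb a c u hu]
      ring
    simp only [hin, zero_mul, add_zero]
    have hsum : ∑ b, (-Hmean u) * (if a = b then 1 else 0) * pd b (η i) u
        = (-Hmean u) * pd a (η i) u := by
      simp [ite_mul, mul_ite]
    rw [hsum, hHm u hu]
    ring
  -- differentiability
  have hdBk : ∀ i, Differentiable ℝ (Bk i) := fun i => (hBksm i).differentiable (by simp)
  have hdBkd : ∀ i, Differentiable ℝ (Bkd i) := fun i => (hBkdsm i).differentiable (by simp)
  have hdθ : ∀ i, Differentiable ℝ (θ i) := fun i => (hθsm i).differentiable (by simp)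
  have hdη : ∀ i, Differentiable ℝ (η i) := fun i => (hηsm i).differentiable (by simp)
  -- constancy of Bk - c1 θ and Bkd - c2 η
  have hconst1 : ∀ i, ∀ u ∈ U,
      Bk i u - c1 * θ i u = Bk i u0 - c1 * θ i u0 := by
    intro i u hu
    have hdiff : Differentiable ℝ (fun v => Bk i v - c1 * θ i v) :=
      (hdBk i).sub ((hdθ i).const_mul c1)
    have hpd : ∀ a, ∀ v ∈ U, pd a (fun w => Bk i w - c1 * θ i w) v = 0 := by
      intro a v hv
      have hfd : fderiv ℝ (fun w => Bk i w - c1 * θ i w) v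
          = fderiv ℝ (Bk i) v - c1 • fderiv ℝ (θ i) v := by
        rw [fderiv_fun_sub ((hdBk i) v) (((hdθ i) v).const_mul c1),
          fderiv_const_mul ((hdθ i) v)]
      have := key1 i a v hv
      simp only [pd, hfd, ContinuousLinearMap.sub_apply, ContinuousLinearMap.smul_apply,
        smul_eq_mul]
      simp only [pd] at this
      rw [this]
      ring
    exact eq_on_of_pd_zero hUc hdiff hpd u0 hu0 u hu
  have hconst2 : ∀ i, ∀ u ∈ U,
      Bkd i u - c2 * η i u = Bkd i u0 - c2 * η i u0 := by
    intro i u hu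
    have hdiff : Differentiable ℝ (fun v => Bkd i v - c2 * η i v) :=
      (hdBkd i).sub ((hdη i).const_mul c2)
    have hpd : ∀ a, ∀ v ∈ U, pd a (fun w => Bkd i w - c2 * η i w) v = 0 := by
      intro a v hv
      have hfd : fderiv ℝ (fun w => Bkd i w - c2 * η i w) v
          = fderiv ℝ (Bkd i) v - c2 • fderiv ℝ (η i) v := by
        rw [fderiv_fun_sub ((hdBkd i) v) (((hdη i) v).const_mul c2),
          fderiv_const_mul ((hdη i) v)]
      have := key2 i a v hv
      simp only [pd, hfd, ContinuousLinearMap.sub_apply, ContinuousLinearMap.smul_apply,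
        smul_eq_mul]
      simp only [pd] at this
      rw [this]
      ring
    exact eq_on_of_pd_zero hUc hdiff hpd u0 hu0 u hu
  -- conclusion
  refine ⟨fun i => θ i u0 - Bk i u0 / c1, fun i => η i u0 - Bkd i u0 / c2, ?_⟩
  intro i u hu
  have habs1 : |ε * k0 * l0| = ε * k0 * l0 := abs_of_pos hεkl'
  have habs2 : |k0 * l0 / ε| = k0 * l0 / ε := abs_of_pos (div_pos hkl hεpos)
  constructor
  · rw [habs1, ← hc1def]
    have h := hconst1 i u hu
    field_simp
    ring_nf
    ring_nf at h
    linarith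
  · rw [habs2, ← hc2def]
    have h := hconst2 i u hu
    field_simp
    ring_nf
    ring_nf at h
    linarith
end
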